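/- The open set A = {(t,x) : x > 0, 0 < t − x < f⁻¹(x)} satisfies A ⊆ J⁺(0) \ closure(I⁺(0)) for the metric g = −dt² + (1 + sqrt((t−|x|)₊))dx²; in particular the globally hyperbolic spacetime (ℝ², g) exhibits causal bubbling. -/

import Mathlib

/-!
For `x ≥ 0` the metric coefficient is `ρ = 1 + √(t - x)`, and with `r = √ρ` a timelike curve
satisfies `r x' < t'`. Since `f' (u) = (√(1 + √u) - 1)⁻¹`, the curve `x = f (t - x)` is null; it
leaves the origin alongside the null ray `x = t`, on which `ρ = 1`. Along a timelike curve from the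
origin `t - x` increases, and once the curve has entered `x > 0` for good, `f (t - x) - x` is
nondecreasing; hence `closure I⁺(0) ⊆ {x ≤ f (t - x)}`, which misses `A`. On the other hand, the
ray `x = t` followed by a segment of constant `x` is a causal curve reaching every point of `A`.
-/

noncomputable def rho (t x : ℝ) : ℝ := 1 + Real.sqrt (max (t - |x|) 0)

noncomputable def f (y : ℝ) : ℝ :=
  4 / 3 * ((1 + Real.sqrt y) ^ ((3 : ℝ) / 2) - 1) + 2 * Real.sqrt y

/-- The causal future J⁺(0) of the origin: points reachable by a
future-directed Lipschitz causal curve. -/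
def Jplus : Set (ℝ × ℝ) :=
  {p | p = (0, 0) ∨ ∃ (T : ℝ) (γ : ℝ → ℝ × ℝ) (K : NNReal), 0 < T ∧
    LipschitzOnWith K γ (Set.Icc 0 T) ∧ γ 0 = (0, 0) ∧ γ T = p ∧
    (∀ᵐ s ∂(MeasureTheory.volume.restrict (Set.Icc (0 : ℝ) T)),
      0 < deriv (fun s => (γ s).1) s ∧
      -(deriv (fun s => (γ s).1) s) ^ 2 +
        rho (γ s).1 (γ s).2 * (deriv (fun s => (γ s).2) s) ^ 2 ≤ 0)}

/-- The chronological future I⁺(0) of the origin: points reachable by a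
future-directed Lipschitz timelike curve. -/
def Iplus : Set (ℝ × ℝ) :=
  {p | ∃ (T : ℝ) (γ : ℝ → ℝ × ℝ) (K : NNReal), 0 < T ∧
    LipschitzOnWith K γ (Set.Icc 0 T) ∧ γ 0 = (0, 0) ∧ γ T = p ∧
    (∀ᵐ s ∂(MeasureTheory.volume.restrict (Set.Icc (0 : ℝ) T)),
      0 < deriv (fun s => (γ s).1) s ∧
      -(deriv (fun s => (γ s).1) s) ^ 2 +
        rho (γ s).1 (γ s).2 * (deriv (fun s => (γ s).2) s) ^ 2 < 0)}

open Set MeasureTheory Filter Topology NNReal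

namespace AbsolutelyContinuousOnInterval

variable {g : ℝ → ℝ} {a b : ℝ}

theorem le_of_ae_deriv_nonneg (hg : AbsolutelyContinuousOnInterval g a b) (hab : a ≤ b)
    (hd : ∀ᵐ x, x ∈ Ioo a b → 0 ≤ deriv g x) : g a ≤ g b := by
  have hd' : ∀ᵐ x ∂volume.restrict (Ioc a b), 0 ≤ deriv g x :=
    ae_restrict_of_ae_eq_of_ae_restrict Ioo_ae_eq_Ioc ((ae_restrict_iff' measurableSet_Ioo).2 hd)
  have : 0 ≤ ∫ x in a..b, deriv g x := by
    rw [intervalIntegral.integral_of_le hab]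
    exact setIntegral_nonneg_of_ae_restrict hd'
  linarith [hg.integral_deriv_eq_sub]

theorem lt_of_ae_deriv_pos (hg : AbsolutelyContinuousOnInterval g a b) (hab : a < b)
    (hd : ∀ᵐ x, x ∈ Ioo a b → 0 < deriv g x) : g a < g b := by
  have hd' : 0 ≤ᵐ[volume.restrict (uIoc a b)] deriv g := by
    rw [uIoc_of_le hab.le]
    exact ae_restrict_of_ae_eq_of_ae_restrict Ioo_ae_eq_Ioc
      ((ae_restrict_iff' measurableSet_Ioo).2 (hd.mono fun x hx hx' => (hx hx').le))
  have hsupp : volume (Ioo a b) ≤ volume (Function.support (deriv g) ∩ Ioc a b) :=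
    measure_mono_ae (hd.mono fun x hx hx' => ⟨(hx hx').ne', Ioo_subset_Ioc_self hx'⟩)
  have : 0 < ∫ x in a..b, deriv g x := by
    rw [intervalIntegral.integral_pos_iff_support_of_nonneg_ae' hd' hg.intervalIntegrable_deriv]
    exact ⟨hab, (Measure.measure_Ioo_pos _ |>.2 hab).trans_le hsupp⟩
  linarith [hg.integral_deriv_eq_sub]

end AbsolutelyContinuousOnInterval

theorem LipschitzOnWith.strictMonoOn_of_ae_deriv_pos {g : ℝ → ℝ} {K : ℝ≥0} {D : Set ℝ}
    (hD : Convex ℝ D) (hg : LipschitzOnWith K g D) (hd : ∀ᵐ x, x ∈ interior D → 0 < deriv g x) :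
    StrictMonoOn g D := by
  intro a ha b hb hab
  have hsub : Icc a b ⊆ D := hD.ordConnected.out ha hb
  have hint : Ioo a b ⊆ interior D := interior_maximal (Ioo_subset_Icc_self.trans hsub) isOpen_Ioo
  refine (hg.mono ?_).absolutelyContinuousOnInterval.lt_of_ae_deriv_pos hab
    (hd.mono fun x hx hx' => hx (hint hx'))
  rwa [uIcc_of_le hab.le]

theorem f_of_nonpos {y : ℝ} (hy : y ≤ 0) : f y = 0 := by
  simp [f, Real.sqrt_eq_zero'.2 hy]

theorem strictMonoOn_f : StrictMonoOn f (Ici 0) := by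
  intro a ha b _ hab
  have hs : √a < √b := Real.sqrt_lt_sqrt ha hab
  have hpow : (1 + √a) ^ ((3 : ℝ) / 2) < (1 + √b) ^ ((3 : ℝ) / 2) :=
    Real.rpow_lt_rpow (by positivity) (by linarith) (by norm_num)
  simp only [f]
  linarith

theorem f_nonneg (y : ℝ) : 0 ≤ f y := by
  rcases le_or_gt y 0 with hy | hy
  · rw [f_of_nonpos hy]
  · simpa [f_of_nonpos le_rfl] using (strictMonoOn_f (mem_Ici.2 le_rfl) hy.le hy).le

theorem continuous_f : Continuous f := by
  have : Continuous fun y : ℝ => (1 + √y) ^ ((3 : ℝ) / 2) :=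
    (by fun_prop : Continuous fun y : ℝ => 1 + √y).rpow_const fun y => Or.inl (by positivity)
  unfold f
  fun_prop

theorem hasDerivAt_f {y : ℝ} (hy : 0 < y) : HasDerivAt f (√(1 + √y) - 1)⁻¹ y := by
  have hsqrt := Real.hasDerivAt_sqrt hy.ne'
  have hpow : HasDerivAt (fun w : ℝ => w ^ ((3 : ℝ) / 2)) (3 / 2 * √(1 + √y)) (1 + √y) := by
    convert Real.hasDerivAt_rpow_const (p := (3 : ℝ) / 2) (Or.inl (by positivity : 1 + √y ≠ 0))
      using 1
    rw [Real.sqrt_eq_rpow]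
    norm_num
  have hf : HasDerivAt f (4 / 3 * (3 / 2 * √(1 + √y) * (1 / (2 * √y))) + 2 * (1 / (2 * √y))) y :=
    (((hpow.comp y (hsqrt.const_add 1)).sub_const 1).const_mul (4 / 3)).add (hsqrt.const_mul 2)
  refine hf.congr_deriv ?_
  have hr : 1 < √(1 + √y) := by
    rw [Real.lt_sqrt zero_le_one]
    linarith [Real.sqrt_pos.2 hy]
  have hr2 : √(1 + √y) ^ 2 = 1 + √y := Real.sq_sqrt (by positivity)
  have hr1 : √(1 + √y) - 1 ≠ 0 := (sub_pos.2 hr).ne'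
  field_simp
  linear_combination 4 * hr2

theorem lipschitzOnWith_f {c : ℝ} (hc : 0 < c) :
    LipschitzOnWith (√(1 + √c) - 1)⁻¹.toNNReal f (Ici c) := by
  refine (convex_Ici c).lipschitzOnWith_of_nnnorm_hasDerivWithin_le
    (fun y hy => (hasDerivAt_f (hc.trans_le hy)).hasDerivWithinAt) fun y hy => ?_
  have hr : 0 < √(1 + √c) - 1 := by
    rw [sub_pos, Real.lt_sqrt zero_le_one]
    linarith [Real.sqrt_pos.2 hc]
  have hmono : √(1 + √c) ≤ √(1 + √y) := by gcongr; exact hy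
  rw [← NNReal.coe_le_coe, coe_nnnorm, Real.norm_of_nonneg (inv_nonneg.2 (by linarith)),
    Real.coe_toNNReal _ (inv_nonneg.2 hr.le)]
  gcongr

theorem one_le_rho (t x : ℝ) : 1 ≤ rho t x :=
  le_add_of_nonneg_right (Real.sqrt_nonneg _)

theorem rho_of_nonneg {t x : ℝ} (hx : 0 ≤ x) : rho t x = 1 + √(t - x) := by
  rw [rho, abs_of_nonneg hx]
  rcases le_total (t - x) 0 with h | h
  · rw [max_eq_right h, Real.sqrt_zero, Real.sqrt_eq_zero'.2 h]
  · rw [max_eq_left h]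

theorem sqrt_mul_abs_lt_of_mul_sq_lt {ρ a b : ℝ} (hρ : 0 ≤ ρ) (ha : 0 ≤ a)
    (h : ρ * b ^ 2 < a ^ 2) : √ρ * |b| < a :=
  lt_of_pow_lt_pow_left₀ 2 ha (by rwa [mul_pow, Real.sq_sqrt hρ, sq_abs])

def IsTimelikeAt (t x : ℝ → ℝ) (s : ℝ) : Prop :=
  DifferentiableAt ℝ t s ∧ DifferentiableAt ℝ x s ∧ 0 < deriv t s ∧
    rho (t s) (x s) * deriv x s ^ 2 < deriv t s ^ 2

namespace IsTimelikeAt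

variable {t x : ℝ → ℝ} {s : ℝ}

theorem deriv_sub_pos (h : IsTimelikeAt t x s) : 0 < deriv (fun σ => t σ - x σ) s := by
  obtain ⟨ht, hx, ht', htl⟩ := h
  have hlt : √(rho (t s) (x s)) * |deriv x s| < deriv t s :=
    sqrt_mul_abs_lt_of_mul_sq_lt (zero_le_one.trans (one_le_rho _ _)) ht'.le htl
  have hρ : 1 ≤ √(rho (t s) (x s)) := Real.one_le_sqrt.2 (one_le_rho _ _)
  rw [deriv_fun_sub ht hx]
  nlinarith [le_abs_self (deriv x s), abs_nonneg (deriv x s)]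

theorem deriv_f_sub_sub_nonneg (h : IsTimelikeAt t x s) (hx : 0 ≤ x s) (hu : 0 < t s - x s) :
    0 ≤ deriv (fun σ => f (t σ - x σ) - x σ) s := by
  obtain ⟨ht, hxd, ht', htl⟩ := h
  rw [rho_of_nonneg hx] at htl
  set r := √(1 + √(t s - x s))
  have hr : 1 < r := by
    rw [Real.lt_sqrt zero_le_one]
    linarith [Real.sqrt_pos.2 hu]
  have hlt : r * deriv x s < deriv t s :=
    (mul_le_mul_of_nonneg_left (le_abs_self _) (by positivity)).trans_lt
      (sqrt_mul_abs_lt_of_mul_sq_lt (by positivity) ht'.le htl)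
  have hderiv : HasDerivAt (fun σ => f (t σ - x σ) - x σ)
      ((r - 1)⁻¹ * (deriv t s - deriv x s) - deriv x s) s :=
    ((hasDerivAt_f hu).comp (h := fun σ => t σ - x σ) s
      (ht.hasDerivAt.sub hxd.hasDerivAt)).sub hxd.hasDerivAt
  -- `f' = (r - 1)⁻¹` turns the sign of this derivative into the timelike condition `r x' < t'`
  have hnull : (r - 1)⁻¹ * (deriv t s - deriv x s) - deriv x s =
      (r - 1)⁻¹ * (deriv t s - r * deriv x s) := by
    field_simp [(sub_pos.2 hr).ne']
    ring
  rw [hderiv.deriv, hnull]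
  exact mul_nonneg (inv_nonneg.2 (by linarith)) (by linarith)

end IsTimelikeAt

theorem ae_isTimelikeAt {t x : ℝ → ℝ} {T : ℝ} {K : ℝ≥0} (hx : LipschitzOnWith K x (Icc 0 T))
    (h : ∀ᵐ s ∂volume.restrict (Icc 0 T),
      0 < deriv t s ∧ -deriv t s ^ 2 + rho (t s) (x s) * deriv x s ^ 2 < 0) :
    ∀ᵐ s, s ∈ Ioo 0 T → IsTimelikeAt t x s := by
  filter_upwards [(ae_restrict_iff' measurableSet_Icc).1 h, hx.ae_differentiableWithinAt_of_mem_real]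
    with s hs hxs hsT
  obtain ⟨ht', htl⟩ := hs (Ioo_subset_Icc_self hsT)
  -- `deriv t s` is `0` where `t` is not differentiable, so `0 < deriv t s` forces differentiability
  exact ⟨differentiableAt_of_deriv_ne_zero ht'.ne',
    (hxs (Ioo_subset_Icc_self hsT)).differentiableAt (Icc_mem_nhds hsT.1 hsT.2), ht', by linarith⟩

theorem exists_last_nonpos {x : ℝ → ℝ} {a b : ℝ} (hab : a ≤ b) (hx : ContinuousOn x (Icc a b))
    (ha : x a ≤ 0) : ∃ c ∈ Icc a b, x c ≤ 0 ∧ ∀ s ∈ Ioc c b, 0 < x s := by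
  have hS : IsClosed (Icc a b ∩ x ⁻¹' Iic 0) :=
    hx.preimage_isClosed_of_isClosed isClosed_Icc isClosed_Iic
  obtain ⟨c, ⟨hc, hxc⟩, hmax⟩ := (isCompact_Icc.of_isClosed_subset hS inter_subset_left)
    |>.exists_isGreatest ⟨a, left_mem_Icc.2 hab, ha⟩
  exact ⟨c, hc, hxc, fun s hs => lt_of_not_ge fun hxs =>
    hs.1.not_ge (hmax ⟨⟨hc.1.trans hs.1.le, hs.2⟩, hxs⟩)⟩

theorem strictMonoOn_sub_of_ae_isTimelikeAt {t x : ℝ → ℝ} {T : ℝ} {Kt Kx : ℝ≥0}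
    (ht : LipschitzOnWith Kt t (Icc 0 T)) (hx : LipschitzOnWith Kx x (Icc 0 T))
    (htl : ∀ᵐ s, s ∈ Ioo 0 T → IsTimelikeAt t x s) :
    StrictMonoOn (fun s => t s - x s) (Icc 0 T) :=
  (ht.sub hx).strictMonoOn_of_ae_deriv_pos (convex_Icc 0 T)
    (by rw [interior_Icc]; exact htl.mono fun s hs hs' => (hs hs').deriv_sub_pos)

theorem le_f_sub_of_ae_isTimelikeAt {t x : ℝ → ℝ} {T : ℝ} {Kt Kx : ℝ≥0} (hT : 0 ≤ T)
    (ht : LipschitzOnWith Kt t (Icc 0 T)) (hx : LipschitzOnWith Kx x (Icc 0 T))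
    (ht0 : t 0 = 0) (hx0 : x 0 = 0) (htl : ∀ᵐ s, s ∈ Ioo 0 T → IsTimelikeAt t x s) :
    x T ≤ f (t T - x T) := by
  set u : ℝ → ℝ := fun s => t s - x s
  have hu_lip : LipschitzOnWith (Kt + Kx) u (Icc 0 T) := ht.sub hx
  have hu_mono : StrictMonoOn u (Icc 0 T) := strictMonoOn_sub_of_ae_isTimelikeAt ht hx htl
  have hu_pos : ∀ s ∈ Ioc 0 T, 0 < u s := fun s hs => by
    simpa [u, ht0, hx0] using hu_mono ⟨le_rfl, hT⟩ (Ioc_subset_Icc_self hs) hs.1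
  rcases le_or_gt (x T) 0 with hxT | hxT
  · exact hxT.trans (f_nonneg _)
  -- after the last time `c` with `x ≤ 0`, the curve stays where `ρ = 1 + √(t - x)`
  obtain ⟨c, hc, hxc, hpos⟩ := exists_last_nonpos hT hx.continuousOn hx0.le
  set G : ℝ → ℝ := fun s => f (u s) - x s
  have hG_le : ∀ s ∈ Ioc c T, G s ≤ G T := by
    intro s hs
    have hs0 : 0 < s := hc.1.trans_lt hs.1
    have hsub : Icc s T ⊆ Icc 0 T := Icc_subset_Icc hs0.le le_rfl
    have hmaps : MapsTo u (Icc s T) (Ici (u s)) := fun σ hσ =>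
      hu_mono.monotoneOn ⟨hs0.le, hs.2⟩ (hsub hσ) hσ.1
    have hG_lip := ((lipschitzOnWith_f (hu_pos s ⟨hs0, hs.2⟩)).comp (hu_lip.mono hsub) hmaps).sub
      (hx.mono hsub)
    rw [← uIcc_of_le hs.2] at hG_lip
    refine hG_lip.absolutelyContinuousOnInterval.le_of_ae_deriv_nonneg hs.2 ?_
    filter_upwards [htl] with σ hσ hσ'
    exact (hσ ⟨hs0.trans hσ'.1, hσ'.2⟩).deriv_f_sub_sub_nonneg
      (hpos σ ⟨hs.1.trans hσ'.1, hσ'.2.le⟩).le (hu_pos σ ⟨hs0.trans hσ'.1, hσ'.2.le⟩)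
  have hcT : c < T := hc.2.lt_of_ne (by rintro rfl; linarith)
  have hG_cont : ContinuousOn G (Icc c T) :=
    ((continuous_f.comp_continuousOn hu_lip.continuousOn).sub hx.continuousOn).mono
      (Icc_subset_Icc hc.1 le_rfl)
  have hGc : G c ≤ G T :=
    ContinuousWithinAt.closure_le (by rw [closure_Ioc hcT.ne]; exact left_mem_Icc.2 hcT.le)
      ((hG_cont c (left_mem_Icc.2 hcT.le)).mono Ioc_subset_Icc_self) continuousWithinAt_const hG_le
  have : 0 ≤ G c := by linarith [f_nonneg (u c)]
  linarith

theorem Iplus_subset : Iplus ⊆ {q | q.2 ≤ f (q.1 - q.2)} := by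
  rintro q ⟨T, γ, K, hT, hγ, hγ0, rfl, hae⟩
  have ht : LipschitzOnWith K (fun s => (γ s).1) (Icc 0 T) :=
    one_mul K ▸ LipschitzWith.prod_fst.comp_lipschitzOnWith hγ
  have hx : LipschitzOnWith K (fun s => (γ s).2) (Icc 0 T) :=
    one_mul K ▸ LipschitzWith.prod_snd.comp_lipschitzOnWith hγ
  exact le_f_sub_of_ae_isTimelikeAt hT.le ht hx (by simp [hγ0]) (by simp [hγ0])
    (ae_isTimelikeAt hx hae)

theorem closure_Iplus_subset : closure Iplus ⊆ {q | q.2 ≤ f (q.1 - q.2)} :=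
  closure_minimal Iplus_subset
    (isClosed_le continuous_snd (continuous_f.comp (continuous_fst.sub continuous_snd)))

theorem mem_Jplus {p : ℝ × ℝ} (h0 : 0 ≤ p.2) (h1 : p.2 ≤ p.1) : p ∈ Jplus := by
  rcases (h0.trans h1).eq_or_lt with hT | hT
  · exact Or.inl (Prod.ext hT.symm (le_antisymm (hT ▸ h1) h0))
  refine Or.inr ⟨p.1, fun s => (s, min s p.2), 1, hT, ?_, by simp [h0], by simp [h1], ?_⟩
  · simpa using (LipschitzWith.id.prodMk (LipschitzWith.id.min_const p.2)).lipschitzOnWith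
  have hne : ∀ᵐ s ∂volume.restrict (Icc 0 p.1), s ∉ ({p.2} : Set ℝ) :=
    ae_restrict_of_ae (measure_eq_zero_iff_ae_notMem.1 (measure_singleton p.2))
  filter_upwards [hne, ae_restrict_mem measurableSet_Icc] with s hs hsT
  simp only [deriv_id'', one_pow, zero_lt_one, true_and]
  rcases lt_or_gt_of_ne (mt mem_singleton_iff.2 hs) with hlt | hgt
  · have hmin : (fun σ => min σ p.2) =ᶠ[𝓝 s] id :=
      eventually_of_mem (Iio_mem_nhds hlt) fun σ hσ => min_eq_left (le_of_lt hσ)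
    rw [hmin.deriv_eq, min_eq_left hlt.le, rho_of_nonneg hsT.1]
    simp
  · have hmin : (fun σ => min σ p.2) =ᶠ[𝓝 s] fun _ => p.2 :=
      eventually_of_mem (Ioi_mem_nhds hgt) fun σ hσ => min_eq_right (le_of_lt hσ)
    rw [hmin.deriv_eq]
    simp

theorem causal_bubbling_general (finv : ℝ → ℝ)
    (h_right : ∀ s ∈ Set.Ici (0 : ℝ), f (finv s) = s) :
    {p : ℝ × ℝ | 0 < p.2 ∧ 0 < p.1 - p.2 ∧ p.1 - p.2 < finv p.2}.Nonempty ∧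
    {p : ℝ × ℝ | 0 < p.2 ∧ 0 < p.1 - p.2 ∧ p.1 - p.2 < finv p.2} ⊆
      Jplus \ closure Iplus := by
  constructor
  · have h1 : f (finv 1) = 1 := h_right 1 (mem_Ici.2 zero_le_one)
    have hpos : 0 < finv 1 := lt_of_not_ge fun h => by simp [f_of_nonpos h] at h1
    exact ⟨(1 + finv 1 / 2, 1), one_pos, by simpa using half_pos hpos, by simp; linarith⟩
  · rintro p ⟨hx, hu, hlt⟩
    refine ⟨mem_Jplus hx.le (by linarith), fun hp => ?_⟩
    have hf : f (p.1 - p.2) < p.2 := by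
      simpa [h_right p.2 hx.le] using strictMonoOn_f hu.le (hu.trans hlt).le hlt
    exact (closure_Iplus_subset hp).not_gt hf

/-- A ⊆ J⁺(0) \ closure(I⁺(0)), and A is nonempty: the globally
hyperbolic spacetime (ℝ², g) exhibits causal bubbling. -/
theorem causal_bubbling (finv : ℝ → ℝ)
    (h_nonneg : ∀ s ∈ Set.Ici (0 : ℝ), finv s ∈ Set.Ici (0 : ℝ))
    (h_left : ∀ t ∈ Set.Ici (0 : ℝ), finv (f t) = t)
    (h_right : ∀ s ∈ Set.Ici (0 : ℝ), f (finv s) = s) :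
    {p : ℝ × ℝ | 0 < p.2 ∧ 0 < p.1 - p.2 ∧ p.1 - p.2 < finv p.2}.Nonempty ∧
    {p : ℝ × ℝ | 0 < p.2 ∧ 0 < p.1 - p.2 ∧ p.1 - p.2 < finv p.2} ⊆
      Jplus \ closure Iplus :=
  causal_bubbling_general finv h_right
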